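/- Let n be a positive integer divisible by 2. Let D_1 and D_2 be sets of divisors of n, and let S_i = ⋃_{d∈D_i} G_n(d) for i = 1,2. If the multiset (λ_k(S_1))_{k∈[n]} equals the multiset (λ_k(S_2))_{k∈[n]} (i.e., the integral circulant graphs ICG(n,D_1) and ICG(n,D_2) are isospectral), then λ_{n/2}(S_1) = λ_{n/2}(S_2). -/

import Mathlib

open Finset

/-- `ω_n = exp(2πi/n)`. -/
noncomputable def omegaN (n : ℕ) : ℂ := Complex.exp (2 * Real.pi * Complex.I / n)

/-- `λ_k(S) = ∑_{g ∈ S} ω_n^{k g}`, the eigenvalues of the circulant graph `Cay(ℤ_n, S)`. -/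
noncomputable def lam (n : ℕ) (S : Finset ℕ) (k : ℕ) : ℂ :=
  ∑ g ∈ S, omegaN n ^ (k * g)

/-- The spectrum of `Cay(ℤ_n, S)`, i.e. the multiset `(λ_k(S))_{k ∈ [n]}`. -/
noncomputable def spec (n : ℕ) (S : Finset ℕ) : Multiset ℂ :=
  (Finset.Icc 1 n).val.map (lam n S)

/-- The connection set of `ICG(n, D)`:
`⋃_{d ∈ D} G_n(d) = {j ∈ [n] : gcd(j,n) ∈ D}` where `G_n(d) = {j ∈ [n] : gcd(j,n) = d}`. -/
def connSet (n : ℕ) (D : Finset ℕ) : Finset ℕ :=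
  (Finset.Icc 1 n).filter (fun j => Nat.gcd j n ∈ D)

/-!
The connection set is closed under negation modulo `n`, so `λ_{n-k} = λ_k` and the indices of
`[n]` other than `n/2` and `n` pair off. Modulo `2`, the multiplicity of a value `a` in the spectrum
is therefore `[λ_{n/2} = a] + [λ_n = a]`. As `λ_n(S) = |S|` is the largest absolute value in the
spectrum, isospectral graphs share it, and taking `a = λ_{n/2}(S₁)` gives the claim.
-/

theorem sum_Icc_eq_add_of_forall_sub_eq {R : Type*} [Ring R] [CharP R 2] {n : ℕ} (h2 : 2 ∣ n)
    (f : ℕ → R) (hf : ∀ k ≤ n, f (n - k) = f k) :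
    ∑ k ∈ Icc 1 n, f k = f (n / 2) + f n := by
  rcases Nat.eq_zero_or_pos n with rfl | hpos
  · simp [CharTwo.add_self_eq_zero]
  have hn : n ∈ Icc 1 n := by simp [Nat.one_le_iff_ne_zero.mpr hpos.ne']
  have hhalf : n / 2 ∈ (Icc 1 n).erase n := by
    simp only [mem_erase, mem_Icc]
    omega
  have hpairs : ∑ k ∈ ((Icc 1 n).erase n).erase (n / 2), f k = 0 := by
    refine sum_involution (fun k _ => n - k) (fun k hk => ?_) (fun k hk _ => ?_)
      (fun k hk => ?_) (fun k hk => ?_) <;> simp only [mem_erase, mem_Icc] at hk ⊢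
    · rw [hf k hk.2.2.2, CharTwo.add_self_eq_zero]
    all_goals omega
  rw [← add_sum_erase _ _ hn, ← add_sum_erase _ _ hhalf, hpairs, add_zero, add_comm]

theorem natCast_count_map_Icc_of_forall_sub_eq {α : Type*} [DecidableEq α] {n : ℕ}
    (h2 : 2 ∣ n) (f : ℕ → α) (hf : ∀ k ≤ n, f (n - k) = f k) (a : α) :
    (((Icc 1 n).val.map f).count a : ZMod 2) =
      (if a = f (n / 2) then 1 else 0) + (if a = f n then 1 else 0) := by
  rw [Multiset.count_map, ← filter_val, card_val, natCast_card_filter]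
  exact sum_Icc_eq_add_of_forall_sub_eq h2 _ fun k hk => by rw [hf k hk]

theorem isPrimitiveRoot_omegaN {n : ℕ} (hn : n ≠ 0) : IsPrimitiveRoot (omegaN n) n :=
  Complex.isPrimitiveRoot_exp n hn

theorem lam_self {n : ℕ} (hn : n ≠ 0) (S : Finset ℕ) : lam n S n = #S := by
  simp [lam, pow_mul, (isPrimitiveRoot_omegaN hn).pow_eq_one]

theorem norm_lam_le {n : ℕ} (hn : n ≠ 0) (S : Finset ℕ) (k : ℕ) : ‖lam n S k‖ ≤ #S := by
  calc ‖lam n S k‖ ≤ ∑ g ∈ S, ‖omegaN n ^ (k * g)‖ := norm_sum_le _ _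
    _ = #S := by simp [(isPrimitiveRoot_omegaN hn).norm'_eq_one hn]

theorem card_le_card_of_spec_eq {n : ℕ} (hn : n ≠ 0) {S T : Finset ℕ}
    (h : spec n S = spec n T) : #S ≤ #T := by
  have hmem : (#S : ℂ) ∈ spec n T := by
    rw [← h, ← lam_self hn S]
    exact Multiset.mem_map_of_mem _ (by simp [Nat.one_le_iff_ne_zero.mpr hn])
  obtain ⟨k, -, hk⟩ := Multiset.mem_map.mp hmem
  exact_mod_cast hk ▸ norm_lam_le hn T k

theorem card_eq_card_of_spec_eq {n : ℕ} (hn : n ≠ 0) {S T : Finset ℕ}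
    (h : spec n S = spec n T) : #S = #T :=
  (card_le_card_of_spec_eq hn h).antisymm (card_le_card_of_spec_eq hn h.symm)

section Reflection

variable {n : ℕ}

theorem sub_mod_mem_Icc (hn : n ≠ 0) (g : ℕ) : n - g % n ∈ Icc 1 n := by
  have := Nat.mod_lt g (Nat.pos_of_ne_zero hn)
  simp only [mem_Icc]
  omega

theorem sub_sub_mod_mod_of_mem_Icc {g : ℕ} (hg : g ∈ Icc 1 n) : n - (n - g % n) % n = g := by
  obtain ⟨hg1, hgn⟩ := mem_Icc.mp hg
  rcases hgn.eq_or_lt with rfl | hlt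
  · simp
  · rw [Nat.mod_eq_of_lt hlt, Nat.mod_eq_of_lt (by omega), Nat.sub_sub_self hgn]

theorem gcd_sub_mod_left (hn : n ≠ 0) (g : ℕ) : Nat.gcd (n - g % n) n = Nat.gcd g n := by
  rw [Nat.gcd_self_sub_left (Nat.mod_lt g (Nat.pos_of_ne_zero hn)).le, ← Nat.gcd_rec, Nat.gcd_comm]

theorem sub_mod_mem_connSet (hn : n ≠ 0) {D : Finset ℕ} {g : ℕ} (hg : g ∈ connSet n D) :
    n - g % n ∈ connSet n D := by
  rw [connSet, mem_filter] at hg ⊢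
  exact ⟨sub_mod_mem_Icc hn g, (gcd_sub_mod_left hn g).symm ▸ hg.2⟩

-- Both exponents are `≡ -k g (mod n)`.
theorem omegaN_pow_sub_mul (hn : n ≠ 0) {k : ℕ} (hk : k ≤ n) (g : ℕ) :
    omegaN n ^ ((n - k) * g) = omegaN n ^ (k * (n - g % n)) := by
  have hω := isPrimitiveRoot_omegaN hn
  rw [(hω.isOfFinOrder hn).pow_eq_pow_iff_modEq, ← hω.eq_orderOf,
    ← ZMod.natCast_eq_natCast_iff]
  push_cast [Nat.cast_sub hk, Nat.cast_sub (Nat.mod_lt g (Nat.pos_of_ne_zero hn)).le,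
    ZMod.natCast_self, ZMod.natCast_mod]
  ring

theorem lam_connSet_sub (hn : n ≠ 0) (D : Finset ℕ) {k : ℕ} (hk : k ≤ n) :
    lam n (connSet n D) (n - k) = lam n (connSet n D) k := by
  have hS : connSet n D ⊆ Icc 1 n := filter_subset _ _
  refine sum_nbij' (fun g => n - g % n) (fun g => n - g % n) (fun g hg => ?_) (fun g hg => ?_)
    (fun g hg => ?_) (fun g hg => ?_) (fun g _ => omegaN_pow_sub_mul hn hk g)
  any_goals exact sub_mod_mem_connSet hn hg
  all_goals exact sub_sub_mod_mod_of_mem_Icc (hS hg)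

end Reflection

theorem lam_half_eq_of_isospectral_general
    (n : ℕ) (hn : 0 < n) (h2 : 2 ∣ n)
    (D₁ D₂ : Finset ℕ)
    (hspec : spec n (connSet n D₁) = spec n (connSet n D₂)) :
    lam n (connSet n D₁) (n / 2) = lam n (connSet n D₂) (n / 2) := by
  classical
  set a := lam n (connSet n D₁) (n / 2)
  have hcount : ((spec n (connSet n D₁)).count a : ZMod 2) = (spec n (connSet n D₂)).count a := by
    rw [hspec]
  rw [spec, spec,
    natCast_count_map_Icc_of_forall_sub_eq h2 _ (fun k hk => lam_connSet_sub hn.ne' D₁ hk),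
    natCast_count_map_Icc_of_forall_sub_eq h2 _ (fun k hk => lam_connSet_sub hn.ne' D₂ hk),
    lam_self hn.ne', lam_self hn.ne', card_eq_card_of_spec_eq hn.ne' hspec, add_left_inj,
    if_pos rfl] at hcount
  by_contra hne
  rw [if_neg hne] at hcount
  exact one_ne_zero hcount

/-- For even `n`, isospectral integral circulant graphs have equal eigenvalue at `n/2`. -/
theorem lam_half_eq_of_isospectral
    (n : ℕ) (hn : 0 < n) (h2 : 2 ∣ n)
    (D₁ D₂ : Finset ℕ)
    (hD₁ : D₁ ⊆ n.divisors) (hD₂ : D₂ ⊆ n.divisors)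
    (hspec : spec n (connSet n D₁) = spec n (connSet n D₂)) :
    lam n (connSet n D₁) (n / 2) = lam n (connSet n D₂) (n / 2) :=
  lam_half_eq_of_isospectral_general n hn h2 D₁ D₂ hspec
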